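/- arXiv:1211.3173 — 2 statements merged into one kernel-verified Lean document; each statement's English description precedes it below -/
import Mathlib

section
/- If X is a Banach space such that ℓ∞(X) contains an isomorphic copy of c₀(ω₂), then X itself contains an isomorphic copy of c₀(ω₂). -/
open Filter Set
open scoped ZeroAtInfty

noncomputable section

abbrev LinfSeq : Type := lp (fun _ : ℕ => ℝ) ⊤

def c0Null : Submodule ℝ LinfSeq where
  carrier := {x | Tendsto (fun n => x n) atTop (nhds (0 : ℝ))}
  add_mem' := by
    intro x y hx hy
    simpa [lp.coeFn_add] using hx.add hy
  zero_mem' := by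
    simpa [lp.coeFn_zero] using (tendsto_const_nhds : Tendsto (fun _ : ℕ => (0:ℝ)) atTop (nhds 0))
  smul_mem' := by
    intro c x hx
    have h := hx.const_mul c
    simpa [lp.coeFn_smul, smul_eq_mul] using h

abbrev LinfModC0 : Type := LinfSeq ⧸ c0Null

/-- `y ∈ ℓ∞/c₀` is constantly `r` on the clopen set `[E]*` of `ℕ*`. -/
def ConstOnStar (E : Set ℕ) (r : ℝ) (y : LinfModC0) : Prop :=
  ∃ x : LinfSeq, Submodule.Quotient.mk x = y ∧
    Tendsto (fun n => x n) (atTop ⊓ 𝓟 E) (nhds r)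

section c0
variable (Γ : Type) [TopologicalSpace Γ] [DiscreteTopology Γ]

def c0Ind (s : Set Γ) (hs : s.Finite) : C₀(Γ, ℝ) where
  toFun := s.indicator 1
  continuous_toFun := continuous_of_discreteTopology
  zero_at_infty' := by
    have h : ∀ᶠ γ in cocompact Γ, γ ∉ s := by
      rw [cocompact_eq_cofinite]; exact hs.eventually_cofinite_notMem
    exact tendsto_const_nhds.congr' (h.mono fun γ hγ => (Set.indicator_of_notMem hγ 1).symm)

theorem c0Ind_norm_le (s : Set Γ) (hs : s.Finite) : ‖c0Ind Γ s hs‖ ≤ 1 := by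
  rw [← ZeroAtInftyContinuousMap.norm_toBCF_eq_norm]
  refine (BoundedContinuousFunction.norm_le zero_le_one).2 fun γ => ?_
  by_cases h : γ ∈ s <;> simp [c0Ind, Set.indicator_apply, h]

abbrev LinfC0 : Type := lp (fun _ : ℕ => C₀(Γ, ℝ)) ⊤

def IsPartialFun (σ : Set (ℕ × Γ)) : Prop :=
  ∀ ⦃n : ℕ⦄ ⦃β β' : Γ⦄, (n, β) ∈ σ → (n, β') ∈ σ → β = β'

theorem fiber_finite {σ : Set (ℕ × Γ)} (hσ : IsPartialFun Γ σ) (n : ℕ) :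
    {β : Γ | (n, β) ∈ σ}.Finite :=
  Set.Subsingleton.finite fun β hβ β' hβ' => hσ hβ hβ'

/-- `1_σ ∈ ℓ∞(c₀(Γ))`, the indicator of the graph of a partial function `σ`. -/
def oneGraph (σ : Set (ℕ × Γ)) (hσ : IsPartialFun Γ σ) : LinfC0 Γ :=
  ⟨fun n => c0Ind Γ {β : Γ | (n, β) ∈ σ} (fiber_finite Γ hσ n), by
    apply memℓp_infty
    refine ⟨1, ?_⟩
    rintro - ⟨n, rfl⟩
    exact c0Ind_norm_le Γ _ _⟩

theorem isPartialFun_graph (σ : ℕ → Γ) : IsPartialFun Γ {p : ℕ × Γ | σ p.1 = p.2} := by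
  rintro n β β' h h'
  simp only [Set.mem_setOf_eq] at h h'
  exact h.symm.trans h'

/-- `1_σ` for a total function `σ : ℕ → Γ`. -/
def oneFun (σ : ℕ → Γ) : LinfC0 Γ :=
  oneGraph Γ {p : ℕ × Γ | σ p.1 = p.2} (isPartialFun_graph Γ σ)

theorem isPartialFun_single (n : ℕ) (α : Γ) : IsPartialFun Γ {(n, α)} := by
  rintro m β β' h h'
  simp only [Set.mem_singleton_iff, Prod.mk.injEq] at h h'
  exact h.2.trans h'.2.symm

/-- `1_{n,α}`, the indicator of `{(n,α)}`. -/
def onePt (n : ℕ) (α : Γ) : LinfC0 Γ :=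
  oneGraph Γ {(n, α)} (isPartialFun_single Γ n α)

end c0

section Banach
variable (Y : Type) [NormedAddCommGroup Y] [NormedSpace ℝ Y]

abbrev LinfB : Type := lp (fun _ : ℕ => Y) ⊤

def c0NullB : Submodule ℝ (LinfB Y) where
  carrier := {x | Tendsto (fun n => x n) atTop (nhds (0 : Y))}
  add_mem' := by
    intro x y hx hy
    simpa [lp.coeFn_add] using hx.add hy
  zero_mem' := by
    simpa [lp.coeFn_zero] using (tendsto_const_nhds : Tendsto (fun _ : ℕ => (0:Y)) atTop (nhds 0))
  smul_mem' := by
    intro c x hx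
    have h := hx.const_smul c
    simpa [lp.coeFn_smul] using h

abbrev LinfModC0B : Type := LinfB Y ⧸ c0NullB Y

end Banach

/-!
Let `T : c₀(Γ) → ℓ∞(X)` be bounded below by `c` and let `e_γ` be the unit vectors of `c₀(Γ)`.
Each `T e_γ` has a coordinate of norm `> c / 2`, and as `ℵ₂` has uncountable cofinality one
coordinate `n` serves `ℵ₂` many `γ`; let `S` be `T` followed by the `n`-th coordinate. A functional
`ψ_α` norming `S e_α` gives `φ_α = ψ_α ∘ S`, an element of `ℓ¹(Γ)`, hence small off a finite set
`G α`. The free set lemma for finite set mappings yields `B` of size `ℵ₂` with `β ∉ G α` for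
distinct `α, β ∈ B`. For `f` supported on `B`, testing `S f` against `φ_α` at a coordinate `α`
where `|f α| > ‖f‖ / 2` shows that `S` is bounded below on `c₀(B) ≅ c₀(Γ)`.
-/

theorem lp.exists_lt_norm_apply {ι : Type*} {E : ι → Type*} [∀ i, NormedAddCommGroup (E i)]
    {f : lp E ⊤} {r : ℝ} (hr : 0 ≤ r) (h : r < ‖f‖) : ∃ i, r < ‖f i‖ := by
  by_contra! hf
  exact (lp.norm_le_of_forall_le hr hf).not_gt h

section FreeSet

open Cardinal

universe u

variable {κ : Cardinal.{u}}

theorem Cardinal.IsRegular.exists_subset_le_mk_eq_nat (hκ : κ.IsRegular) (hκ₀ : ℵ₀ < κ)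
    {β : Type u} {A : Set β} (f : β → ℕ) (hA : κ ≤ #A) :
    ∃ n, ∃ t ⊆ A, κ ≤ #t ∧ ∀ x ∈ t, f x = n := by
  obtain ⟨⟨n⟩, t, htA, ht, hf⟩ := infinite_pigeonhole_set (fun x : A => ULift.up (f x)) κ hA
    hκ.aleph0_le (by simpa [hκ.cof_ord] using hκ₀)
  exact ⟨n, t, htA, ht, fun x hx => congrArg ULift.down (hf hx)⟩

theorem Cardinal.le_mk_sdiff_singleton {β : Type u} {S : Set β} (hκ : ℵ₀ ≤ κ) (hS : κ ≤ #S)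
    (a : β) : κ ≤ #(S \ {a} : Set β) := by
  by_contra! h
  have h1 : #({a} : Set β) < κ := by simpa using one_lt_aleph0.trans_le hκ
  exact (hS.trans (le_mk_sdiff_add_mk S {a})).not_gt (add_lt_of_lt hκ h h1)

variable {Γ : Type u}

theorem exists_pairwise_notMem_of_forall_mk_lt (hκ : κ.IsRegular) (F : Γ → Finset Γ)
    {A : Set Γ} (hA : κ ≤ #A) (hF : ∀ a, #{α ∈ A | a ∈ F α} < κ) :
    ∃ B ⊆ A, κ ≤ #B ∧ B.Pairwise fun α β => β ∉ F α := by
  obtain ⟨B, hB⟩ := zorn_subset {B | B ⊆ A ∧ B.Pairwise fun α β => β ∉ F α}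
    fun c hc hchain => ⟨⋃₀ c, ⟨sUnion_subset fun s hs => (hc hs).1,
      (pairwise_sUnion hchain.directedOn).2 fun s hs => (hc hs).2⟩, fun _ => subset_sUnion_of_mem⟩
  refine ⟨B, hB.prop.1, ?_, hB.prop.2⟩
  by_contra! hBκ
  have hFκ : ∀ β ∈ B, #(F β : Set Γ) < κ := fun β _ =>
    (F β).finite_toSet.lt_aleph0.trans_le hκ.aleph0_le
  -- a point outside `bad` could be added to `B`, contradicting maximality
  set bad := B ∪ (⋃ β ∈ B, (F β : Set Γ)) ∪ ⋃ β ∈ B, {α ∈ A | β ∈ F α}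
  have hbad : #bad < κ := by
    refine (mk_union_le _ _).trans_lt (add_lt_of_lt hκ.aleph0_le ?_ ?_)
    · exact (mk_union_le _ _).trans_lt (add_lt_of_lt hκ.aleph0_le hBκ
        ((card_biUnion_lt_iff_forall_of_isRegular hκ hBκ).2 hFκ))
    · exact (card_biUnion_lt_iff_forall_of_isRegular hκ hBκ).2 fun β _ => hF β
  obtain ⟨a, haA, habad⟩ := sdiff_nonempty_of_mk_lt_mk (hbad.trans_le hA)
  have hins : insert a B ∈ {B | B ⊆ A ∧ B.Pairwise fun α β => β ∉ F α} :=
    ⟨insert_subset haA hB.prop.1, hB.prop.2.insert fun β hβ _ =>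
      ⟨fun h => habad (Or.inr (mem_biUnion hβ ⟨haA, h⟩)),
        fun h => habad (Or.inl (Or.inr (mem_biUnion hβ h)))⟩⟩
  exact habad (Or.inl (Or.inl (hB.2 hins (subset_insert a B) (mem_insert a B))))

theorem exists_pairwise_notMem_of_card_le (hκ : κ.IsRegular) (n : ℕ) (F : Γ → Finset Γ)
    {A : Set Γ} (hA : κ ≤ #A) (hF : ∀ α ∈ A, (F α).card ≤ n) :
    ∃ B ⊆ A, κ ≤ #B ∧ B.Pairwise fun α β => β ∉ F α := by
  classical
  induction n generalizing F A with
  | zero =>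
    refine ⟨A, subset_rfl, hA, fun α hα β _ _ hβ => ?_⟩
    simp [Finset.card_eq_zero.1 (Nat.le_zero.1 (hF α hα))] at hβ
  | succ n ih =>
    by_cases h : ∃ a, κ ≤ #{α ∈ A | a ∈ F α}
    · -- on the `α` with `a ∈ F α`, erasing `a` lowers the size of `F α`
      obtain ⟨a, ha⟩ := h
      obtain ⟨B, hBA, hB, hfree⟩ := ih (fun α => (F α).erase a)
        (le_mk_sdiff_singleton hκ.aleph0_le ha a) fun α hα => by
          have := Finset.card_erase_of_mem hα.1.2
          have := hF α hα.1.1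
          omega
      exact ⟨B, fun α hα => (hBA hα).1.1, hB, fun α hα β hβ hne hβF =>
        hfree hα hβ hne (Finset.mem_erase.2 ⟨(hBA hβ).2, hβF⟩)⟩
    · push Not at h
      exact exists_pairwise_notMem_of_forall_mk_lt hκ F hA h

/-- Free set lemma for finite set mappings. -/
theorem exists_pairwise_notMem (hκ : κ.IsRegular) (hκ₀ : ℵ₀ < κ) (F : Γ → Finset Γ)
    {A : Set Γ} (hA : κ ≤ #A) : ∃ B ⊆ A, κ ≤ #B ∧ B.Pairwise fun α β => β ∉ F α := by
  obtain ⟨n, t, htA, ht, hF⟩ := hκ.exists_subset_le_mk_eq_nat hκ₀ (fun α => (F α).card) hA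
  obtain ⟨B, hBt, hB, hfree⟩ := exists_pairwise_notMem_of_card_le hκ n F ht fun α hα => (hF α hα).le
  exact ⟨B, hBt.trans htA, hB, hfree⟩

end FreeSet

section C0

variable {Γ : Type} [TopologicalSpace Γ]

theorem ZeroAtInftyContinuousMap.abs_apply_le_norm (f : C₀(Γ, ℝ)) (γ : Γ) : |f γ| ≤ ‖f‖ := by
  simpa [ZeroAtInftyContinuousMap.norm_toBCF_eq_norm] using f.toBCF.norm_coe_le_norm γ

theorem ZeroAtInftyContinuousMap.norm_le_of_forall_abs_le {f : C₀(Γ, ℝ)} {M : ℝ} (hM : 0 ≤ M)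
    (h : ∀ γ, |f γ| ≤ M) : ‖f‖ ≤ M := by
  rw [← ZeroAtInftyContinuousMap.norm_toBCF_eq_norm]
  exact (BoundedContinuousFunction.norm_le hM).2 h

theorem ZeroAtInftyContinuousMap.exists_lt_abs_apply {f : C₀(Γ, ℝ)} {r : ℝ} (hr : 0 ≤ r)
    (h : r < ‖f‖) : ∃ γ, r < |f γ| := by
  by_contra! hf
  exact (norm_le_of_forall_abs_le hr hf).not_gt h

variable [DiscreteTopology Γ]

def c0Single (γ : Γ) : C₀(Γ, ℝ) := c0Ind Γ {γ} (Set.finite_singleton γ)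

open scoped Classical in
theorem c0Single_apply (γ β : Γ) : c0Single γ β = if β = γ then 1 else 0 := by
  simp [c0Single, c0Ind, Pi.single_apply]

theorem norm_c0Single (γ : Γ) : ‖c0Single γ‖ = 1 := by
  have h := (c0Single γ).abs_apply_le_norm γ
  rw [c0Single_apply, if_pos rfl, abs_one] at h
  exact (c0Ind_norm_le Γ _ _).antisymm h

open scoped Classical in
theorem sum_smul_c0Single_apply (s : Finset Γ) (a : Γ → ℝ) (γ : Γ) :
    (∑ β ∈ s, a β • c0Single β) γ = if γ ∈ s then a γ else 0 := by
  change AddMonoidHom.mk' (fun f : C₀(Γ, ℝ) => f γ) (fun _ _ => rfl) _ = _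
  simp [map_sum, c0Single_apply]

theorem ZeroAtInftyContinuousMap.finite_setOf_le_abs (f : C₀(Γ, ℝ)) {ε : ℝ} (hε : 0 < ε) :
    {γ | ε ≤ |f γ|}.Finite := by
  have hf : ∀ᶠ γ in cofinite, |f γ| < ε := by
    rw [← cocompact_eq_cofinite]
    simpa using (zero_at_infty f).norm.eventually (gt_mem_nhds (by simpa using hε))
  simpa using hf

theorem ZeroAtInftyContinuousMap.exists_norm_sub_sum_le (f : C₀(Γ, ℝ)) {η : ℝ} (hη : 0 < η) :
    ∃ t : Finset Γ, (∀ β ∈ t, f β ≠ 0) ∧ ‖f - ∑ β ∈ t, f β • c0Single β‖ ≤ η := by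
  classical
  refine ⟨(f.finite_setOf_le_abs hη).toFinset, fun β hβ hβ0 => ?_, ?_⟩
  · simp only [Set.Finite.mem_toFinset, Set.mem_ofPred_eq, hβ0, abs_zero] at hβ
    linarith
  · refine norm_le_of_forall_abs_le hη.le fun γ => ?_
    rw [ZeroAtInftyContinuousMap.coe_sub, Pi.sub_apply, sum_smul_c0Single_apply]
    split_ifs with hγ
    · simpa using hη.le
    · simp only [Set.Finite.mem_toFinset, Set.mem_ofPred_eq, not_le] at hγ
      simpa using hγ.le

theorem sum_abs_apply_c0Single_le (φ : StrongDual ℝ C₀(Γ, ℝ)) (s : Finset Γ) :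
    ∑ β ∈ s, |φ (c0Single β)| ≤ ‖φ‖ := by
  set w := ∑ β ∈ s, (SignType.sign (φ (c0Single β)) : ℝ) • c0Single β
  have hw : ‖w‖ ≤ 1 := by
    refine ZeroAtInftyContinuousMap.norm_le_of_forall_abs_le zero_le_one fun γ => ?_
    rw [sum_smul_c0Single_apply]
    split_ifs
    · rcases SignType.sign (φ (c0Single γ)) with _ | _ | _ <;> simp
    · simp
  calc ∑ β ∈ s, |φ (c0Single β)| = φ w := by simp [w, map_sum]
    _ ≤ ‖φ w‖ := le_abs_self _
    _ ≤ ‖φ‖ * ‖w‖ := φ.le_opNorm w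
    _ ≤ ‖φ‖ := mul_le_of_le_one_right (norm_nonneg φ) hw

theorem exists_finset_abs_apply_le (φ : StrongDual ℝ C₀(Γ, ℝ)) {ε : ℝ} (hε : 0 < ε) :
    ∃ G : Finset Γ, ∀ f : C₀(Γ, ℝ), (∀ β ∈ G, f β = 0) → |φ f| ≤ ε * ‖f‖ := by
  have hsum : Summable fun β => |φ (c0Single β)| :=
    summable_of_sum_le (fun _ => abs_nonneg _) (sum_abs_apply_c0Single_le φ)
  obtain ⟨G, hG⟩ := summable_iff_vanishing.1 hsum (Iio ε) (Iio_mem_nhds hε)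
  refine ⟨G, fun f hf => le_of_forall_pos_le_add fun θ hθ => ?_⟩
  obtain ⟨t, ht, hft⟩ := f.exists_norm_sub_sum_le (div_pos hθ (by positivity : 0 < ‖φ‖ + 1))
  have htG : Disjoint t G := Finset.disjoint_left.2 fun β hβt hβG => ht β hβt (hf β hβG)
  have hmain : |φ (∑ β ∈ t, f β • c0Single β)| ≤ ε * ‖f‖ := by
    calc |φ (∑ β ∈ t, f β • c0Single β)| = |∑ β ∈ t, f β * φ (c0Single β)| := by simp [map_sum]
      _ ≤ ∑ β ∈ t, ‖f‖ * |φ (c0Single β)| := by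
        refine (Finset.abs_sum_le_sum_abs _ _).trans (Finset.sum_le_sum fun β _ => ?_)
        rw [abs_mul]
        exact mul_le_mul_of_nonneg_right (f.abs_apply_le_norm β) (abs_nonneg _)
      _ ≤ ‖f‖ * ε := by
        rw [← Finset.mul_sum]
        exact mul_le_mul_of_nonneg_left (hG t htG).le (norm_nonneg f)
      _ = ε * ‖f‖ := mul_comm _ _
  have herr : |φ (f - ∑ β ∈ t, f β • c0Single β)| ≤ θ :=
    calc _ ≤ ‖φ‖ * ‖f - ∑ β ∈ t, f β • c0Single β‖ := φ.le_opNorm _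
      _ ≤ ‖φ‖ * (θ / (‖φ‖ + 1)) := mul_le_mul_of_nonneg_left hft (norm_nonneg φ)
      _ ≤ θ := by
        rw [mul_div_assoc']
        exact div_le_of_le_mul₀ (by positivity) hθ.le (by nlinarith)
  calc |φ f| = |φ (∑ β ∈ t, f β • c0Single β) + φ (f - ∑ β ∈ t, f β • c0Single β)| := by
        rw [map_sub, add_sub_cancel]
    _ ≤ _ := abs_add_le _ _
    _ ≤ ε * ‖f‖ + θ := add_le_add hmain herr

end C0

section ExtendByZero

variable {Γ Δ : Type} [TopologicalSpace Γ] [DiscreteTopology Γ]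
  [TopologicalSpace Δ] [DiscreteTopology Δ] {u : Δ → Γ}

theorem ZeroAtInftyContinuousMap.tendsto_extend_zero (hu : u.Injective) (f : C₀(Δ, ℝ)) :
    Tendsto (Function.extend u f 0) (cocompact Γ) (nhds 0) := by
  rw [cocompact_eq_cofinite]
  intro U hU
  have hf : {y | f y ∉ U}.Finite := by
    have := zero_at_infty f
    rw [cocompact_eq_cofinite] at this
    exact this hU
  refine (hf.image u).subset fun x hx => ?_
  by_cases hx' : ∃ y, u y = x
  · obtain ⟨y, rfl⟩ := hx'
    exact ⟨y, by simpa [hu.extend_apply] using hx, rfl⟩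
  · exact absurd (mem_of_mem_nhds hU) (by simpa [Function.extend_apply' _ _ _ hx'] using hx)

def extendByZero (hu : u.Injective) : C₀(Δ, ℝ) →ₗᵢ[ℝ] C₀(Γ, ℝ) where
  toFun f := ⟨⟨Function.extend u f 0, continuous_of_discreteTopology⟩, f.tendsto_extend_zero hu⟩
  map_add' f g := by ext x; simpa using congrFun (Function.extend_add u f g 0 0) x
  map_smul' r f := by ext x; simpa using congrFun (Function.extend_smul r u f 0) x
  norm_map' f := by
    refine le_antisymm
      (ZeroAtInftyContinuousMap.norm_le_of_forall_abs_le (norm_nonneg f) fun x => ?_)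
      (ZeroAtInftyContinuousMap.norm_le_of_forall_abs_le (norm_nonneg _) fun y => ?_)
    · by_cases hx : ∃ y, u y = x
      · obtain ⟨y, rfl⟩ := hx
        simpa [hu.extend_apply] using f.abs_apply_le_norm y
      · simp [Function.extend_apply' _ _ _ hx]
    · convert ZeroAtInftyContinuousMap.abs_apply_le_norm _ (u y)
      exact (hu.extend_apply f 0 y).symm

theorem extendByZero_apply_of_notMem_range (hu : u.Injective) (f : C₀(Δ, ℝ)) {x : Γ}
    (hx : x ∉ Set.range u) : extendByZero hu f x = 0 :=
  Function.extend_apply' _ _ _ hx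

end ExtendByZero

open Cardinal in
theorem exists_subset_mul_norm_le_norm {Γ : Type} [TopologicalSpace Γ] [DiscreteTopology Γ]
    {E : Type*} [NormedAddCommGroup E] [NormedSpace ℝ E] (S : C₀(Γ, ℝ) →L[ℝ] E)
    {κ : Cardinal} (hκ : κ.IsRegular) (hκ₀ : ℵ₀ < κ) {A : Set Γ} (hA : κ ≤ #A) {δ : ℝ}
    (hδ : 0 < δ) (hS : ∀ α ∈ A, δ ≤ ‖S (c0Single α)‖) :
    ∃ B ⊆ A, κ ≤ #B ∧ ∀ f : C₀(Γ, ℝ), (∀ γ ∉ B, f γ = 0) → δ / 4 * ‖f‖ ≤ ‖S f‖ := by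
  choose ψ hψ using fun x : E => exists_dual_vector'' ℝ x
  set φ : Γ → StrongDual ℝ C₀(Γ, ℝ) := fun α => (ψ (S (c0Single α))).comp S
  have hφ_le (α : Γ) (f : C₀(Γ, ℝ)) : |φ α f| ≤ ‖S f‖ :=
    ((ψ _).le_opNorm (S f)).trans (mul_le_of_le_one_left (norm_nonneg _) (hψ _).1)
  choose G hG using fun α => exists_finset_abs_apply_le (φ α) (by positivity : 0 < δ / 8)
  obtain ⟨B, hBA, hB, hfree⟩ := exists_pairwise_notMem hκ hκ₀ G hA
  refine ⟨B, hBA, hB, fun f hf => ?_⟩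
  rcases eq_or_ne f 0 with rfl | hf0
  · simp
  obtain ⟨α, hα⟩ := f.exists_lt_abs_apply (by positivity) (half_lt_self (norm_pos_iff.2 hf0))
  have hαB : α ∈ B := by
    by_contra h
    rw [hf α h, abs_zero] at hα
    linarith [norm_nonneg f]
  set h := f - f α • c0Single α
  have hh : ∀ β ∈ G α, h β = 0 := by
    intro β hβ
    by_cases hβα : β = α
    · simp [h, hβα, c0Single_apply]
    · have hβB : β ∉ B := fun hβB => hfree hαB hβB (Ne.symm hβα) hβ
      simp [h, hf β hβB, c0Single_apply, hβα]
  have hh_norm : ‖h‖ ≤ 2 * ‖f‖ :=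
    calc ‖h‖ ≤ ‖f‖ + ‖f α • c0Single α‖ := norm_sub_le _ _
      _ = ‖f‖ + |f α| := by rw [norm_smul, norm_c0Single, mul_one, Real.norm_eq_abs]
      _ ≤ 2 * ‖f‖ := by linarith [f.abs_apply_le_norm α]
  have hφα : δ ≤ φ α (c0Single α) := by simpa [φ, (hψ _).2] using hS α (hBA hαB)
  have hsplit : f α * φ α (c0Single α) = φ α f - φ α h := by simp [h, map_sub]
  calc δ / 4 * ‖f‖ ≤ |f α| * δ - δ / 8 * (2 * ‖f‖) := by nlinarith
    _ ≤ |f α * φ α (c0Single α)| - |φ α h| := by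
      rw [abs_mul, abs_of_nonneg (hδ.le.trans hφα)]
      gcongr
      exact (hG α h hh).trans (by gcongr)
    _ ≤ |φ α f| := by linarith [hsplit ▸ abs_sub (φ α f) (φ α h)]
    _ ≤ ‖S f‖ := hφ_le α f

open Cardinal in
theorem statement5_general (Γ : Type) [TopologicalSpace Γ] [DiscreteTopology Γ]
    (hΓ : Cardinal.mk Γ = Cardinal.aleph 2)
    (X : Type) [NormedAddCommGroup X] [NormedSpace ℝ X]
    (h : ∃ T : C₀(Γ, ℝ) →L[ℝ] lp (fun _ : ℕ => X) ⊤,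
      ∃ c > (0 : ℝ), ∀ f, c * ‖f‖ ≤ ‖T f‖) :
    ∃ T : C₀(Γ, ℝ) →L[ℝ] X, ∃ c > (0 : ℝ), ∀ f, c * ‖f‖ ≤ ‖T f‖ := by
  obtain ⟨T, c, hc, hT⟩ := h
  have hκ : (ℵ_ 2).IsRegular := by simpa [one_add_one_eq_two] using isRegular_aleph_add_one 1
  have hκ₀ : ℵ₀ < ℵ_ 2 := by simp
  have hcoord (γ : Γ) : ∃ n, c / 2 < ‖T (c0Single γ) n‖ := by
    have hTγ := hT (c0Single γ)
    rw [norm_c0Single, mul_one] at hTγ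
    exact lp.exists_lt_norm_apply (by positivity) (by linarith)
  choose n hn using hcoord
  obtain ⟨n₀, A, -, hA, hAn⟩ := hκ.exists_subset_le_mk_eq_nat hκ₀ n (A := Set.univ) (by simp [hΓ])
  set S := (lp.evalCLM ℝ (fun _ : ℕ => X) ⊤ n₀).comp T
  obtain ⟨B, -, hB, hSB⟩ := exists_subset_mul_norm_le_norm S hκ hκ₀ hA (half_pos hc)
    fun α hα => (hAn α hα ▸ hn α).le
  obtain ⟨u⟩ : Nonempty (Γ ≃ B) := Cardinal.eq.1 ((mk_set_le B).antisymm (hΓ ▸ hB)).symm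
  have hu : (fun γ => (u γ : Γ)).Injective := Subtype.val_injective.comp u.injective
  refine ⟨S.comp (extendByZero hu).toContinuousLinearMap, c / 8, by positivity, fun f => ?_⟩
  have hJf : ∀ γ ∉ B, extendByZero hu f γ = 0 := fun γ hγ =>
    extendByZero_apply_of_notMem_range hu f fun ⟨δ, hδ⟩ => hγ (hδ ▸ (u δ).2)
  calc c / 8 * ‖f‖ = c / 2 / 4 * ‖extendByZero hu f‖ := by rw [LinearIsometry.norm_map]; ring
    _ ≤ _ := hSB _ hJf

/-- If `ℓ∞(X)` contains an isomorphic copy of `c₀(ω₂)` then so does `X`. -/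
theorem statement5 (Γ : Type) [TopologicalSpace Γ] [DiscreteTopology Γ]
    (hΓ : Cardinal.mk Γ = Cardinal.aleph 2)
    (X : Type) [NormedAddCommGroup X] [NormedSpace ℝ X] [CompleteSpace X]
    (h : ∃ T : C₀(Γ, ℝ) →L[ℝ] lp (fun _ : ℕ => X) ⊤,
      ∃ c > (0 : ℝ), ∀ f, c * ‖f‖ ≤ ‖T f‖) :
    ∃ T : C₀(Γ, ℝ) →L[ℝ] X, ∃ c > (0 : ℝ), ∀ f, c * ‖f‖ ≤ ‖T f‖ :=
  statement5_general Γ hΓ X h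
end
end

section
/- Suppose T : ℓ∞(c₀(ω₂)) → ℓ∞/c₀ is a bounded operator, ε > 0, m ∈ ℕ with ‖T‖ < m·ε/4, and σ₁, ..., σ_{2m} : ℕ → ω₂ are pairwise disjoint (as graphs) functions such that for each i there is a representative x_{σᵢ} of T(1_{σᵢ}) with B = ∩ᵢ {k : |x_{σᵢ}(k)| > ε/4} infinite. Then a contradiction arises; hence no such configuration exists. Precisely: there is no ultrafilter point u ∈ [B]* and indices j₁ < ... < j_m with all T(1_{σ_{jᵢ}})(u) of the same sign, compatible with ‖Σᵢ 1_{σ_{jᵢ}}‖ = 1. -/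
/-! Let `u` be an ultrafilter on `ℕ` finer than `atTop ⊓ 𝓟 B`, i.e. a point of `[B]*`. Along `u`
each `xᵢ` has a constant sign, so some `m` of the `2m` indices share a sign, and along `u` the sum
`z` of the corresponding `xᵢ` has absolute value at least `m·ε/4`; hence so does the quotient norm
of `z`, which represents `T (∑ 1_{σᵢ})`. The graphs of the `σᵢ` are disjoint, so
`‖∑ 1_{σᵢ}‖ ≤ 1`, and therefore `m·ε/4 ≤ ‖T‖`. -/

open Filter Set
open scoped ZeroAtInfty

noncomputable section

section OneFun
variable {Γ : Type} [TopologicalSpace Γ] [DiscreteTopology Γ]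

theorem oneFun_apply_apply (σ : ℕ → Γ) (n : ℕ) (γ : Γ) :
    oneFun Γ σ n γ = ({σ n} : Set Γ).indicator 1 γ := by
  simp [oneFun, oneGraph, c0Ind]

theorem sum_oneFun_apply_apply {ι : Type} (S : Finset ι) (σ : ι → ℕ → Γ) (n : ℕ) (γ : Γ) :
    (∑ i ∈ S, oneFun Γ (σ i)) n γ = ∑ i ∈ S, oneFun Γ (σ i) n γ := by
  rw [lp.coeFn_sum, Finset.sum_apply]
  exact map_sum (AddMonoidHom.mk' (fun f : C₀(Γ, ℝ) => f γ) fun _ _ => rfl) _ _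

theorem norm_sum_oneFun_le_one {ι : Type} (S : Finset ι) (σ : ι → ℕ → Γ)
    (hdisj : ∀ i ∈ S, ∀ j ∈ S, i ≠ j → ∀ n, σ i n ≠ σ j n) :
    ‖∑ i ∈ S, oneFun Γ (σ i)‖ ≤ 1 := by
  classical
  refine lp.norm_le_of_forall_le zero_le_one fun n => ?_
  rw [← ZeroAtInftyContinuousMap.norm_toBCF_eq_norm]
  refine (BoundedContinuousFunction.norm_le zero_le_one).2 fun γ => ?_
  rw [ZeroAtInftyContinuousMap.toBCF_apply, sum_oneFun_apply_apply]
  simp only [oneFun_apply_apply, Set.indicator_apply, Set.mem_singleton_iff, Pi.one_apply,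
    Finset.sum_boole, Real.norm_natCast, Nat.cast_le_one]
  refine Finset.card_le_one.2 fun i hi j hj => ?_
  by_contra hij
  exact hdisj i (Finset.mem_filter.1 hi).1 j (Finset.mem_filter.1 hj).1 hij n
    ((Finset.mem_filter.1 hi).2.symm.trans (Finset.mem_filter.1 hj).2)

end OneFun

theorem le_norm_mk_of_frequently_le_abs {z : LinfSeq} {r : ℝ}
    (h : ∃ᶠ k in atTop, r ≤ |z k|) : r ≤ ‖(Submodule.Quotient.mk z : LinfModC0)‖ := by
  by_contra! hlt
  obtain ⟨w, hw, hwr⟩ := Submodule.Quotient.norm_mk_lt (Submodule.Quotient.mk z : LinfModC0)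
    (sub_pos.2 hlt)
  have hnull : Tendsto (fun k => z k - w k) atTop (nhds 0) := show z - w ∈ c0Null by
    rw [← Submodule.Quotient.mk_eq_zero, Submodule.Quotient.mk_sub, hw, sub_self]
  obtain ⟨k, hzk, hk⟩ := (h.and_eventually
    (hnull.abs.eventually (gt_mem_nhds (a := r - ‖w‖) (by rw [abs_zero]; linarith)))).exists
  have hwk : |w k| ≤ ‖w‖ := lp.norm_apply_le_norm ENNReal.top_ne_zero w k
  have := abs_sub_abs_le_abs_sub (z k) (w k)
  linarith

theorem card_mul_le_abs_sum {ι : Type} {S : Finset ι} {a : ι → ℝ} {c : ℝ}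
    (hsign : (∀ i ∈ S, 0 ≤ a i) ∨ ∀ i ∈ S, a i ≤ 0) (hc : ∀ i ∈ S, c ≤ |a i|) :
    S.card * c ≤ |∑ i ∈ S, a i| := by
  have habs : |∑ i ∈ S, a i| = ∑ i ∈ S, |a i| := by
    rcases hsign with hpos | hneg
    · rw [Finset.abs_sum_of_nonneg hpos]
      exact Finset.sum_congr rfl fun i hi => (abs_of_nonneg (hpos i hi)).symm
    · rw [← abs_neg, ← Finset.sum_neg_distrib,
        Finset.abs_sum_of_nonneg fun i hi => neg_nonneg.2 (hneg i hi)]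
      exact Finset.sum_congr rfl fun i hi => (abs_of_nonpos (hneg i hi)).symm
  rw [habs, ← nsmul_eq_mul]
  exact Finset.card_nsmul_le_sum _ _ _ hc

theorem Ultrafilter.exists_eventually_same_sign {ι α : Type} [Fintype ι] (u : Ultrafilter α)
    (a : ι → α → ℝ) : ∃ S : Finset ι, Fintype.card ι ≤ 2 * S.card ∧
      ∀ᶠ k in u, (∀ i ∈ S, 0 ≤ a i k) ∨ ∀ i ∈ S, a i k ≤ 0 := by
  classical
  set P := Finset.univ.filter fun i => ∀ᶠ k in u, 0 ≤ a i k
  have hcard := Finset.card_add_card_compl P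
  by_cases hP : Fintype.card ι ≤ 2 * P.card
  · refine ⟨P, hP, Eventually.mono ?_ fun k hk => Or.inl hk⟩
    exact (Filter.eventually_all_finset P).2 fun i hi => (Finset.mem_filter.1 hi).2
  · refine ⟨Pᶜ, by omega, Eventually.mono ?_ fun k hk => Or.inr hk⟩
    refine (Filter.eventually_all_finset Pᶜ).2 fun i hi => ?_
    have : ¬∀ᶠ k in u, 0 ≤ a i k := by simpa [P] using hi
    exact (Ultrafilter.eventually_not.2 this).mono fun k hk => (not_le.1 hk).le

theorem statement14_general (Γ : Type) [TopologicalSpace Γ] [DiscreteTopology Γ]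
    (T : LinfC0 Γ →L[ℝ] LinfModC0) (ε : ℝ) (hε : 0 < ε) (m : ℕ)
    (hT : ‖T‖ < m * ε / 4)
    (σ : Fin (2 * m) → ℕ → Γ)
    (hdis : ∀ i j, i ≠ j → ∀ n, σ i n ≠ σ j n)
    (x : Fin (2 * m) → LinfSeq)
    (hx : ∀ i, Submodule.Quotient.mk (x i) = T (oneFun Γ (σ i)))
    (hB : (⋂ i, {k : ℕ | |x i k| > ε / 4}).Infinite) :
    False := by
  set B := ⋂ i, {k : ℕ | |x i k| > ε / 4}
  have : (atTop ⊓ 𝓟 B).NeBot := frequently_iff_neBot.1 (Nat.frequently_atTop_iff_infinite.2 hB)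
  set u := Ultrafilter.of (atTop ⊓ 𝓟 B)
  have hu : ↑u ≤ atTop ⊓ 𝓟 B := Ultrafilter.of_le _
  obtain ⟨S, hS, hsign⟩ := u.exists_eventually_same_sign fun i k => x i k
  rw [Fintype.card_fin, mul_le_mul_iff_right₀ two_pos] at hS
  have hlarge : ∀ᶠ k in u, m * ε / 4 ≤ |(∑ i ∈ S, x i) k| := by
    filter_upwards [hsign, le_principal_iff.1 (hu.trans inf_le_right)] with k hk hkB
    rw [lp.coeFn_sum, Finset.sum_apply]
    calc (m : ℝ) * ε / 4 ≤ S.card * (ε / 4) := by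
          rw [mul_div_assoc]; gcongr
      _ ≤ _ := card_mul_le_abs_sum hk fun i _ => (Set.mem_iInter.1 hkB i).le
  have hnorm : m * ε / 4 ≤ ‖T (∑ i ∈ S, oneFun Γ (σ i))‖ := by
    have hz := le_norm_mk_of_frequently_le_abs
      (hlarge.frequently.filter_mono (hu.trans inf_le_left))
    rw [← Submodule.mkQ_apply, map_sum] at hz
    simpa only [Submodule.mkQ_apply, hx, map_sum] using hz
  have := T.le_opNorm_of_le (norm_sum_oneFun_le_one S σ fun i _ j _ hij => hdis i j hij)
  linarith

/-- no such configuration exists: a bounded `T : ℓ∞(c₀(ω₂)) → ℓ∞/c₀` with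
`‖T‖ < m·ε/4` and `2m` pairwise disjoint functions `σᵢ : ℕ → ω₂` whose images `T 1_{σᵢ}`
have representatives `xᵢ` with `B = ⋂ᵢ {k : |xᵢ k| > ε/4}` infinite leads to a
contradiction (via an ultrafilter point of `[B]*`, a sign-pigeonhole and
`‖∑ 1_{σ_{jᵢ}}‖ = 1`). -/
theorem statement14 (Γ : Type) [TopologicalSpace Γ] [DiscreteTopology Γ]
    (hΓ : Cardinal.mk Γ = Cardinal.aleph 2)
    (T : LinfC0 Γ →L[ℝ] LinfModC0) (ε : ℝ) (hε : 0 < ε) (m : ℕ)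
    (hT : ‖T‖ < m * ε / 4)
    (σ : Fin (2 * m) → ℕ → Γ)
    (hdis : ∀ i j, i ≠ j → ∀ n, σ i n ≠ σ j n)
    (x : Fin (2 * m) → LinfSeq)
    (hx : ∀ i, Submodule.Quotient.mk (x i) = T (oneFun Γ (σ i)))
    (hB : (⋂ i, {k : ℕ | |x i k| > ε / 4}).Infinite) :
    False :=
  statement14_general Γ T ε hε m hT σ hdis x hx hB
end
end
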